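/- arXiv:2104.13283 — 5 statements merged into one kernel-verified Lean document; each statement's English description precedes it below -/
import Mathlib

section
/- If a bifunction f : C × C → ℝ is strongly Lipschitz-type on C with data αᵢ, βᵢ, Kᵢ, Lᵢ (i = 1,…,p), then f is Lipschitz-type on C with both constants equal to (1/2)·∑ᵢ Kᵢ Lᵢ, i.e., f(u,v) + f(v,w) ≥ f(u,w) − (1/2)(∑ᵢ KᵢLᵢ)‖u−v‖² − (1/2)(∑ᵢ KᵢLᵢ)‖v−w‖² for all u, v, w ∈ C. -/
open RealInnerProductSpace

theorem strongly_lipschitz_imp_lipschitz_type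
    {H : Type*} [NormedAddCommGroup H] [InnerProductSpace ℝ H]
    (C : Set H) (hC : C.Nonempty) (f : H → H → ℝ) (p : ℕ)
    (α : Fin p → H → H → H) (β : Fin p → H → H) (K L : Fin p → ℝ)
    (hK : ∀ i, 0 < K i) (hL : ∀ i, 0 < L i)
    (hβlip : ∀ i, ∀ x y : H, ‖β i x - β i y‖ ≤ K i * ‖x - y‖)
    (hβ0 : ∀ i, β i 0 = 0)
    (hαbd : ∀ i, ∀ x ∈ C, ∀ y ∈ C, ‖α i x y‖ ≤ L i * ‖x - y‖)
    (hαskew : ∀ i, ∀ x ∈ C, ∀ y ∈ C, α i x y + α i y x = 0)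
    (hsl : ∀ x ∈ C, ∀ y ∈ C, ∀ z ∈ C,
      f x y + f y z ≥ f x z + ∑ i, ⟪α i x y, β i (y - z)⟫) :
    ∀ u ∈ C, ∀ v ∈ C, ∀ w ∈ C,
      f u v + f v w ≥ f u w - (1 / 2 * ∑ i, K i * L i) * ‖u - v‖ ^ 2
        - (1 / 2 * ∑ i, K i * L i) * ‖v - w‖ ^ 2 := by
  intro u hu v hv w hw
  have key : ∀ i, ⟪α i u v, β i (v - w)⟫ ≥
      -(K i * L i * (1 / 2 * ‖u - v‖ ^ 2 + 1 / 2 * ‖v - w‖ ^ 2)) := by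
    intro i
    have h1 : |⟪α i u v, β i (v - w)⟫| ≤ ‖α i u v‖ * ‖β i (v - w)‖ :=
      abs_real_inner_le_norm _ _
    have hβ : ‖β i (v - w)‖ ≤ K i * ‖v - w‖ := by
      have := hβlip i (v - w) 0
      simpa [hβ0 i] using this
    have hα : ‖α i u v‖ ≤ L i * ‖u - v‖ := hαbd i u hu v hv
    have h2 : ‖α i u v‖ * ‖β i (v - w)‖ ≤ (L i * ‖u - v‖) * (K i * ‖v - w‖) :=
      mul_le_mul hα hβ (norm_nonneg _) (mul_nonneg (hL i).le (norm_nonneg _))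
    have hamgm : ‖u - v‖ * ‖v - w‖ ≤ 1 / 2 * ‖u - v‖ ^ 2 + 1 / 2 * ‖v - w‖ ^ 2 := by
      nlinarith [sq_nonneg (‖u - v‖ - ‖v - w‖)]
    have h3 : (L i * ‖u - v‖) * (K i * ‖v - w‖) ≤
        K i * L i * (1 / 2 * ‖u - v‖ ^ 2 + 1 / 2 * ‖v - w‖ ^ 2) := by
      have hKL : 0 < K i * L i := mul_pos (hK i) (hL i)
      calc (L i * ‖u - v‖) * (K i * ‖v - w‖) = K i * L i * (‖u - v‖ * ‖v - w‖) := by ring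
        _ ≤ K i * L i * (1 / 2 * ‖u - v‖ ^ 2 + 1 / 2 * ‖v - w‖ ^ 2) := by
            exact mul_le_mul_of_nonneg_left hamgm hKL.le
    have := neg_abs_le (⟪α i u v, β i (v - w)⟫ : ℝ)
    linarith
  have hsum : ∑ i, ⟪α i u v, β i (v - w)⟫ ≥
      ∑ i, -(K i * L i * (1 / 2 * ‖u - v‖ ^ 2 + 1 / 2 * ‖v - w‖ ^ 2)) :=
    Finset.sum_le_sum fun i _ => key i
  have hmain := hsl u hu v hv w hw
  have hrw : ∑ i, -(K i * L i * (1 / 2 * ‖u - v‖ ^ 2 + 1 / 2 * ‖v - w‖ ^ 2)) =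
      -((∑ i, K i * L i) * (1 / 2 * ‖u - v‖ ^ 2 + 1 / 2 * ‖v - w‖ ^ 2)) := by
    simp only [← neg_mul, ← Finset.sum_mul, Finset.sum_neg_distrib]
    congr 1
    rw [← Finset.sum_neg_distrib]
    simp [neg_mul]
  have heq : f u w - (1 / 2 * ∑ i, K i * L i) * ‖u - v‖ ^ 2
      - (1 / 2 * ∑ i, K i * L i) * ‖v - w‖ ^ 2
      = f u w + -((∑ i, K i * L i) * (1 / 2 * ‖u - v‖ ^ 2 + 1 / 2 * ‖v - w‖ ^ 2)) := by
    ring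
  rw [heq]
  rw [hrw] at hsum
  linarith
end

section
/- Let F : C → H, φ : C → ℝ convex lower semicontinuous, λ > 0, and f(x,y) := ⟨F(x), y−x⟩ + φ(y) − φ(x). Define B_λ(x) := argmin_{y ∈ C} {λ f(x,y) + ½‖y−x‖²}. Then for all x, y ∈ C: ‖B_λ(x) − B_λ(y)‖ ≤ ‖x − y − λ(F(x) − F(y))‖. -/
open RealInnerProductSpace

-- variational inequality at the minimizer
lemma key_vi
    {H : Type*} [NormedAddCommGroup H] [InnerProductSpace ℝ H]
    {C : Set H} (hCconv : Convex ℝ C)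
    {φ : H → ℝ} (hφconv : ConvexOn ℝ C φ)
    {lam : ℝ} (hlam : 0 < lam) (Fx : H) (x u : H) (hu : u ∈ C)
    (hmin : IsMinOn (fun y => lam * (⟪Fx, y - x⟫ + φ y - φ x) + 1 / 2 * ‖y - x‖ ^ 2) C u) :
    ∀ z ∈ C, 0 ≤ lam * ⟪Fx, z - u⟫ + lam * (φ z - φ u) + ⟪u - x, z - u⟫ := by
  intro z hz
  set A : ℝ := lam * ⟪Fx, z - u⟫ + lam * (φ z - φ u) + ⟪u - x, z - u⟫ with hA
  set c : ℝ := ‖z - u‖ ^ 2 with hc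
  have hc0 : 0 ≤ c := by positivity
  have hstep : ∀ t : ℝ, 0 < t → t ≤ 1 → 0 ≤ A + t / 2 * c := by
    intro t ht ht1
    have ht0 : (0:ℝ) ≤ 1 - t := by linarith
    have hw : (1 - t) • u + t • z ∈ C := hCconv hu hz ht0 ht.le (by ring)
    have hmw := hmin hw
    simp only [Set.mem_setOf_eq] at hmw
    have hφw : φ ((1 - t) • u + t • z) ≤ (1 - t) * φ u + t * φ z :=
      hφconv.2 hu hz ht0 ht.le (by ring)
    have hweq : (1 - t) • u + t • z - x = (u - x) + t • (z - u) := by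
      rw [sub_smul, one_smul, smul_sub]; abel
    have hinner : ⟪Fx, (1 - t) • u + t • z - x⟫ = ⟪Fx, u - x⟫ + t * ⟪Fx, z - u⟫ := by
      rw [hweq, inner_add_right, real_inner_smul_right]
    have hnorm : ‖(1 - t) • u + t • z - x‖ ^ 2
        = ‖u - x‖ ^ 2 + 2 * (t * ⟪u - x, z - u⟫) + t ^ 2 * c := by
      rw [hweq, norm_add_sq_real, real_inner_smul_right, norm_smul]
      rw [Real.norm_eq_abs, abs_of_pos ht, mul_pow]
    have hineq : lam * (⟪Fx, u - x⟫ + φ u - φ x) + 1 / 2 * ‖u - x‖ ^ 2 ≤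
        lam * (⟪Fx, u - x⟫ + t * ⟪Fx, z - u⟫ + ((1 - t) * φ u + t * φ z) - φ x)
        + 1 / 2 * (‖u - x‖ ^ 2 + 2 * (t * ⟪u - x, z - u⟫) + t ^ 2 * c) := by
      calc lam * (⟪Fx, u - x⟫ + φ u - φ x) + 1 / 2 * ‖u - x‖ ^ 2
          ≤ lam * (⟪Fx, (1 - t) • u + t • z - x⟫ + φ ((1 - t) • u + t • z) - φ x)
            + 1 / 2 * ‖(1 - t) • u + t • z - x‖ ^ 2 := hmw
        _ ≤ _ := by
            rw [hinner, hnorm]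
            nlinarith [hφw]
    have : 0 ≤ t * (A + t / 2 * c) := by
      have := hineq
      simp only [hA, hc] at *
      nlinarith
    nlinarith
  by_contra h
  push_neg at h
  have hε : 0 < -A := by linarith
  set t : ℝ := min 1 (2 * (-A) / (c + 1)) with htdef
  have ht1 : t ≤ 1 := min_le_left _ _
  have htpos : 0 < t := lt_min one_pos (by positivity)
  have h2 : t / 2 * c < -A := by
    have hle : t ≤ 2 * (-A) / (c + 1) := min_le_right _ _
    have h3 : t * (c + 1) ≤ 2 * (-A) := (le_div_iff₀ (by positivity)).mp hle
    nlinarith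
  have := hstep t htpos ht1
  linarith

theorem prox_mvi_basic_estimate
    {H : Type*} [NormedAddCommGroup H] [InnerProductSpace ℝ H]
    (C : Set H) (hCne : C.Nonempty) (hCclosed : IsClosed C) (hCconv : Convex ℝ C)
    (F : H → H) (φ : H → ℝ)
    (hφconv : ConvexOn ℝ C φ) (hφlsc : LowerSemicontinuousOn φ C)
    (lam : ℝ) (hlam : 0 < lam)
    (f : H → H → ℝ) (hf : ∀ x y, f x y = ⟪F x, y - x⟫ + φ y - φ x)
    (B : H → H)
    (hB : ∀ x ∈ C, B x ∈ C ∧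
      IsMinOn (fun y => lam * f x y + 1 / 2 * ‖y - x‖ ^ 2) C (B x)) :
    ∀ x ∈ C, ∀ y ∈ C, ‖B x - B y‖ ≤ ‖x - y - lam • (F x - F y)‖ := by
  intro x hx y hy
  obtain ⟨huC, humin⟩ := hB x hx
  obtain ⟨hvC, hvmin⟩ := hB y hy
  set u := B x
  set v := B y
  have humin' : IsMinOn (fun z => lam * (⟪F x, z - x⟫ + φ z - φ x) + 1 / 2 * ‖z - x‖ ^ 2) C u := by
    simpa only [hf] using humin
  have hvmin' : IsMinOn (fun z => lam * (⟪F y, z - y⟫ + φ z - φ y) + 1 / 2 * ‖z - y‖ ^ 2) C v := by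
    simpa only [hf] using hvmin
  have h1 := key_vi hCconv hφconv hlam (F x) x u huC humin' v hvC
  have h2 := key_vi hCconv hφconv hlam (F y) y v hvC hvmin' u huC
  have hkey : ‖u - v‖ ^ 2 ≤ ⟪u - v, x - y - lam • (F x - F y)⟫ := by
    have e1 : ⟪u - v, x - y - lam • (F x - F y)⟫
        = ⟪u, x⟫ - ⟪u, y⟫ - lam * ⟪u, F x⟫ + lam * ⟪u, F y⟫
          - ⟪v, x⟫ + ⟪v, y⟫ + lam * ⟪v, F x⟫ - lam * ⟪v, F y⟫ := by
      simp [inner_sub_left, inner_sub_right, real_inner_smul_right]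
      ring
    have e2 : ‖u - v‖ ^ 2 = ⟪u, u⟫ - 2 * ⟪u, v⟫ + ⟪v, v⟫ := by
      rw [← real_inner_self_eq_norm_sq, inner_sub_left, inner_sub_right, inner_sub_right,
        real_inner_comm v u]
      ring
    simp only [inner_sub_left, inner_sub_right] at h1 h2
    rw [e1, e2]
    have c1 := real_inner_comm u v
    have c2 := real_inner_comm (F x) u
    have c3 := real_inner_comm (F x) v
    have c4 := real_inner_comm (F y) u
    have c5 := real_inner_comm (F y) v
    have c6 := real_inner_comm x u
    have c7 := real_inner_comm x v
    have c8 := real_inner_comm y u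
    have c9 := real_inner_comm y v
    nlinarith [h1, h2]
  have hcs := real_inner_le_norm (u - v) (x - y - lam • (F x - F y))
  rcases eq_or_lt_of_le (norm_nonneg (u - v)) with h0 | h0
  · rw [← h0]; exact norm_nonneg _
  · have : ‖u - v‖ ^ 2 ≤ ‖u - v‖ * ‖x - y - lam • (F x - F y)‖ := le_trans hkey hcs
    nlinarith
end

section
/- Let F : C → H be δ-cocoercive on C, φ : C → ℝ convex lower semicontinuous, 0 < λ ≤ 2δ, and define B_λ(x) := argmin_{y∈C} {λ(⟨F(x), y−x⟩ + φ(y) − φ(x)) + ½‖y−x‖²}. Then B_λ is nonexpansive on C: ‖B_λ(x) − B_λ(y)‖ ≤ ‖x − y‖ for all x, y ∈ C. -/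
open RealInnerProductSpace

private lemma vi_aux {H : Type*} [NormedAddCommGroup H] [InnerProductSpace ℝ H]
    {C : Set H} (hCconv : Convex ℝ C) {φ : H → ℝ} (hφconv : ConvexOn ℝ C φ)
    {lam : ℝ} (hlam : 0 < lam) (a x : H) {u : H} (hu : u ∈ C)
    (hmin : IsMinOn (fun y => lam * (⟪a, y - x⟫ + φ y - φ x) + 1 / 2 * ‖y - x‖ ^ 2) C u) :
    ∀ z ∈ C, 0 ≤ lam * ⟪a, z - u⟫ + lam * (φ z - φ u) + ⟪u - x, z - u⟫ := by
  intro z hz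
  set A : ℝ := lam * ⟪a, z - u⟫ + lam * (φ z - φ u) + ⟪u - x, z - u⟫ with hA
  have key : ∀ t : ℝ, 0 < t → t ≤ 1 → 0 ≤ t * A + t ^ 2 / 2 * ‖z - u‖ ^ 2 := by
    intro t ht ht1
    have hwC : u + t • (z - u) ∈ C := by
      have h := hCconv hu hz (by linarith : (0:ℝ) ≤ 1 - t) ht.le (by ring)
      have heq : (1 - t) • u + t • z = u + t • (z - u) := by module
      rwa [heq] at h
    have hφw : φ (u + t • (z - u)) ≤ (1 - t) * φ u + t * φ z := by
      have h := hφconv.2 hu hz (by linarith : (0:ℝ) ≤ 1 - t) ht.le (by ring)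
      have heq : (1 - t) • u + t • z = u + t • (z - u) := by module
      rw [heq] at h
      simpa using h
    have hg := isMinOn_iff.mp hmin _ hwC
    have h1 : ⟪a, (u + t • (z - u)) - x⟫ = ⟪a, u - x⟫ + t * ⟪a, z - u⟫ := by
      have : (u + t • (z - u)) - x = (u - x) + t • (z - u) := by abel
      rw [this, inner_add_right, real_inner_smul_right]
    have h2 : ‖(u + t • (z - u)) - x‖ ^ 2
        = ‖u - x‖ ^ 2 + 2 * (t * ⟪u - x, z - u⟫) + t ^ 2 * ‖z - u‖ ^ 2 := by
      have heq : (u + t • (z - u)) - x = (u - x) + t • (z - u) := by abel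
      rw [heq, @norm_add_sq_real, real_inner_smul_right, norm_smul]
      rw [Real.norm_eq_abs, abs_of_pos ht]
      ring
    simp only [h1, h2] at hg
    have hφw' : lam * φ (u + t • (z - u)) ≤ lam * ((1 - t) * φ u + t * φ z) :=
      mul_le_mul_of_nonneg_left hφw hlam.le
    nlinarith [hg, hφw']
  by_contra hAneg
  push_neg at hAneg
  rcases eq_or_lt_of_le (sq_nonneg ‖z - u‖) with hs | hs
  · have := key 1 one_pos le_rfl
    nlinarith
  · set s := ‖z - u‖ ^ 2 with hs'
    have htpos : (0:ℝ) < min 1 (-A / s) := by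
      apply lt_min one_pos
      exact div_pos (by linarith) hs
    have := key _ htpos (min_le_left _ _)
    have hle : min 1 (-A / s) * s ≤ -A := (le_div_iff₀ hs).mp (min_le_right _ _)
    nlinarith [mul_le_mul_of_nonneg_left hle htpos.le]

theorem prox_nonexpansive_of_cocoercive
    {H : Type*} [NormedAddCommGroup H] [InnerProductSpace ℝ H]
    (C : Set H) (hCne : C.Nonempty) (hCclosed : IsClosed C) (hCconv : Convex ℝ C)
    (δ : ℝ) (hδ : 0 < δ) (F : H → H)
    (hcoco : ∀ x ∈ C, ∀ y ∈ C, ⟪F x - F y, x - y⟫ ≥ δ * ‖F x - F y‖ ^ 2)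
    (φ : H → ℝ) (hφconv : ConvexOn ℝ C φ) (hφlsc : LowerSemicontinuousOn φ C)
    (lam : ℝ) (hlam0 : 0 < lam) (hlam1 : lam ≤ 2 * δ)
    (B : H → H)
    (hB : ∀ x ∈ C, B x ∈ C ∧
      IsMinOn (fun y => lam * (⟪F x, y - x⟫ + φ y - φ x) + 1 / 2 * ‖y - x‖ ^ 2) C (B x)) :
    ∀ x ∈ C, ∀ y ∈ C, ‖B x - B y‖ ≤ ‖x - y‖ := by
  intro x hx y hy
  obtain ⟨huC, humin⟩ := hB x hx
  obtain ⟨hvC, hvmin⟩ := hB y hy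
  set u := B x
  set v := B y
  have h1 := vi_aux hCconv hφconv hlam0 (F x) x huC humin v hvC
  have h2 := vi_aux hCconv hφconv hlam0 (F y) y hvC hvmin u huC
  -- rewrite inner products in terms of u - v
  have e1 : ⟪F x, v - u⟫ = -⟪F x, u - v⟫ := by
    rw [show v - u = -(u - v) by abel, inner_neg_right]
  have e2 : ⟪u - x, v - u⟫ = ⟪x - u, u - v⟫ := by
    rw [show u - x = -(x - u) by abel, show v - u = -(u - v) by abel, inner_neg_neg]
  have e3 : ⟪x - u, u - v⟫ + ⟪v - y, u - v⟫ = ⟪x - y, u - v⟫ - ‖u - v‖ ^ 2 := by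
    rw [← inner_add_left, show (x - u) + (v - y) = (x - y) - (u - v) by abel,
      inner_sub_left, @real_inner_self_eq_norm_sq]
  have e4 : ⟪F x - F y, u - v⟫ = ⟪F x, u - v⟫ - ⟪F y, u - v⟫ := inner_sub_left _ _ _
  have hkey : ‖u - v‖ ^ 2 ≤ ⟪(x - y) - lam • (F x - F y), u - v⟫ := by
    rw [inner_sub_left, real_inner_smul_left]
    rw [e1, e2] at h1
    have e4' : lam * ⟪F x - F y, u - v⟫ = lam * ⟪F x, u - v⟫ - lam * ⟪F y, u - v⟫ := by
      rw [e4]; ring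
    linarith [h1, h2, e3, e4']
  set w := (x - y) - lam • (F x - F y) with hw
  have hcs : ⟪w, u - v⟫ ≤ ‖w‖ * ‖u - v‖ := real_inner_le_norm w (u - v)
  have hwle : ‖w‖ ≤ ‖x - y‖ := by
    have hnormsq : ‖w‖ ^ 2 = ‖x - y‖ ^ 2 - 2 * (lam * ⟪F x - F y, x - y⟫)
        + lam ^ 2 * ‖F x - F y‖ ^ 2 := by
      rw [hw, @norm_sub_sq_real, real_inner_smul_right, norm_smul,
        Real.norm_eq_abs, abs_of_pos hlam0, real_inner_comm]
      ring
    have hc := hcoco x hx y hy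
    have hint1 : 2 * lam * (δ * ‖F x - F y‖ ^ 2) ≤ 2 * lam * ⟪F x - F y, x - y⟫ :=
      mul_le_mul_of_nonneg_left hc (by positivity)
    have hint2 : 0 ≤ (2 * δ - lam) * lam * ‖F x - F y‖ ^ 2 :=
      mul_nonneg (mul_nonneg (by linarith) hlam0.le) (sq_nonneg _)
    have hsq : ‖w‖ ^ 2 ≤ ‖x - y‖ ^ 2 := by nlinarith [hint1, hint2]
    nlinarith [norm_nonneg w, norm_nonneg (x - y)]
  by_cases hz : ‖u - v‖ = 0
  · rw [hz]; exact norm_nonneg _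
  · have hpos : 0 < ‖u - v‖ := lt_of_le_of_ne (norm_nonneg _) (Ne.symm hz)
    have : ‖u - v‖ ^ 2 ≤ ‖x - y‖ * ‖u - v‖ := le_trans hkey (le_trans hcs
      (mul_le_mul_of_nonneg_right hwle (norm_nonneg _)))
    nlinarith
end

section
/- Let A = [[0,1],[−1,0]], λ > 0, and B_λ(x) := (x₁ − λx₂, x₂ + λx₁) (the proximal mapping of f(x,y) = ⟨Ax, y−x⟩). Then ‖B_λ(x) − B_λ(0)‖ = √(1 + λ²)·‖x‖ for all x ∈ ℝ²; in particular B_λ is not nonexpansive for any λ > 0, even though f is monotone. -/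
theorem rotation_prox_not_nonexpansive (lam : ℝ) (hlam : 0 < lam)
    (B : EuclideanSpace ℝ (Fin 2) → EuclideanSpace ℝ (Fin 2))
    (hB : ∀ x, B x = (WithLp.equiv 2 (Fin 2 → ℝ)).symm ![x 0 - lam * x 1, x 1 + lam * x 0]) :
    (∀ x : EuclideanSpace ℝ (Fin 2), ‖B x - B 0‖ = Real.sqrt (1 + lam ^ 2) * ‖x‖) ∧
    ¬ (∀ x y : EuclideanSpace ℝ (Fin 2), ‖B x - B y‖ ≤ ‖x - y‖) := by
  have key : ∀ x : EuclideanSpace ℝ (Fin 2),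
      ‖B x - B 0‖ = Real.sqrt (1 + lam ^ 2) * ‖x‖ := by
    intro x
    rw [EuclideanSpace.norm_eq, EuclideanSpace.norm_eq, ← Real.sqrt_mul (by positivity)]
    congr 1
    rw [Fin.sum_univ_two, Fin.sum_univ_two]
    have h0 : (B x - B 0) 0 = x 0 - lam * x 1 := by
      simp [hB]
    have h1 : (B x - B 0) 1 = x 1 + lam * x 0 := by
      simp [hB]
    rw [h0, h1]
    simp only [Real.norm_eq_abs, sq_abs]
    ring
  refine ⟨key, fun h => ?_⟩
  set e : EuclideanSpace ℝ (Fin 2) := (WithLp.equiv 2 (Fin 2 → ℝ)).symm ![1, 0] with he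
  have hne : ‖e‖ = 1 := by
    rw [EuclideanSpace.norm_eq, Fin.sum_univ_two]
    simp [he]
  have h2 := h e 0
  rw [key e, sub_zero, hne, mul_one] at h2
  have hs := Real.sq_sqrt (show (0:ℝ) ≤ 1 + lam ^ 2 by positivity)
  nlinarith [Real.sqrt_nonneg (1 + lam ^ 2)]
end

section
/- Let f : C × C → ℝ be monotone (f(x,y) + f(y,x) ≤ 0 on C) with f(x,·) convex lower semicontinuous, λ > 0, and B_λ(x) := argmin_{y∈C} {λ f(x,y) + ½‖y−x‖²}. Then for all x, y ∈ C: ‖B_λ(x) − B_λ(y)‖² ≤ ‖x − y‖² + 2λ[f(x, B_λ(y)) − f(x, B_λ(x)) + f(y, B_λ(x)) − f(y, B_λ(y))]. -/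
open RealInnerProductSpace

theorem prox_monotone_estimate
    {H : Type*} [NormedAddCommGroup H] [InnerProductSpace ℝ H]
    (C : Set H) (hCne : C.Nonempty) (hCclosed : IsClosed C) (hCconv : Convex ℝ C)
    (f : H → H → ℝ)
    (hmono : ∀ x ∈ C, ∀ y ∈ C, f x y + f y x ≤ 0)
    (hconv : ∀ x ∈ C, ConvexOn ℝ C (f x))
    (hlsc : ∀ x ∈ C, LowerSemicontinuousOn (f x) C)
    (lam : ℝ) (hlam : 0 < lam)
    (B : H → H)
    (hB : ∀ x ∈ C, B x ∈ C ∧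
      IsMinOn (fun y => lam * f x y + 1 / 2 * ‖y - x‖ ^ 2) C (B x))
    (hvar : ∀ x ∈ C, ∀ z ∈ C, ⟪B x - x, B x - z⟫ ≤ lam * (f x z - f x (B x))) :
    ∀ x ∈ C, ∀ y ∈ C,
      ‖B x - B y‖ ^ 2 ≤ ‖x - y‖ ^ 2
        + 2 * lam * (f x (B y) - f x (B x) + f y (B x) - f y (B y)) := by
  intro x hx y hy
  have h1 := hvar x hx (B y) (hB y hy).1
  have h2 := hvar y hy (B x) (hB x hx).1
  have key : ‖B x - B y‖ ^ 2 - ⟪x - y, B x - B y⟫ =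
      ⟪B x - x, B x - B y⟫ + ⟪B y - y, B y - B x⟫ := by
    simp only [inner_sub_left, inner_sub_right, real_inner_comm]
    rw [← real_inner_self_eq_norm_sq]
    simp only [inner_sub_left, inner_sub_right, real_inner_comm]
    ring
  have hcs : ⟪x - y, B x - B y⟫ ≤ ‖x - y‖ * ‖B x - B y‖ := real_inner_le_norm _ _
  nlinarith [sq_nonneg (‖x - y‖ - ‖B x - B y‖)]
end
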